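/- arXiv:1605.02981 — 4 statements merged into one kernel-verified Lean document; each statement's English description precedes it below -/
import Mathlib

section
/- For every m ≥ 2, R_m − R_{m−1} ∈ {−1, 0}: increasing by one the number of lives of a single fixed item either leaves the total number of heaps unchanged or decreases it by exactly one. -/
/-!
Run the algorithm with `m` and with `m - 1` lives for the item `i₀` side by side. After every
step the two configurations are coupled: either they are identical and the second run has
created at most one more root, or both runs have created the same number of roots and the
configurations differ only by one extra life of a single particle in the first run. Once the
configurations differ, the next item's parent label can differ in the two runs only when the
extra life is the one that keeps the parent alive in the first run; the first run then spends
it, and the second run either opens a new root or spends a life elsewhere, which moves the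
extra life to that particle.
-/
open MeasureTheory ProbabilityTheory Filter Topology
open scoped ENNReal NNReal

namespace HeapPatience

/-- Decrement by one the number of lives of the (first) alive particle with label `x`. -/
noncomputable def decrementAt : List (ℝ × ℕ) → ℝ → List (ℝ × ℕ)
  | [], _ => []
  | p :: rest, x =>
      if p.1 = x ∧ 0 < p.2 then (p.1, p.2 - 1) :: rest else p :: decrementAt rest x

/-- One step of the heap patience sorting algorithm, where `acc = (state, number of roots)`:
the new item is attached as a child of the alive particle (a particle with at least one
remaining life) having the largest label smaller than the label of the item, and that
particle loses one life; if there is no such particle, a new root (tree) is created. -/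
noncomputable def step (acc : List (ℝ × ℕ) × ℕ) (item : ℝ × ℕ) : List (ℝ × ℕ) × ℕ :=
  match (acc.1.filter fun p => decide (0 < p.2 ∧ p.1 < item.1)).argmax Prod.fst with
  | none => (item :: acc.1, acc.2 + 1)
  | some q => (item :: decrementAt acc.1 q.1, acc.2)

/-- Run the heap patience sorting algorithm on the items `(label, lives)` in order; returns
the final state (the particles with their remaining lives) and the number of roots created. -/
noncomputable def run (items : List (ℝ × ℕ)) : List (ℝ × ℕ) × ℕ :=
  items.foldl step ([], 0)

/-- `R items` : the number of heaps (trees) produced by the heap patience sorting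
algorithm applied to the finite sequence `items` of pairs `(label, number of lives)`. -/
noncomputable def R (items : List (ℝ × ℕ)) : ℕ := (run items).2

/-- `D items` : after running the algorithm, the number of dead particles whose label is
smaller than the label of every alive particle, i.e. the number of leading zeros of the
label-ordered vector of remaining lives. -/
noncomputable def D (items : List (ℝ × ℕ)) : ℕ :=
  ((run items).1.filter fun p =>
      decide (p.2 = 0 ∧ ∀ q ∈ (run items).1, 0 < q.2 → p.1 < q.1)).length

/-- `Rn U ν n ω` : the random number of heaps `𝐑(n)` needed to sort the first `n`
random items `(U i ω, ν i ω)`. -/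
noncomputable def Rn {Ω : Type} (U : ℕ → Ω → ℝ) (ν : ℕ → Ω → ℕ) (n : ℕ) (ω : Ω) : ℕ :=
  R ((List.range n).map fun i => (U i ω, ν i ω))

/-- `Dn U ν n ω` : the random variable `D_n`, the number of dead items whose label is
smaller than the label of every alive item after sorting the first `n` random items. -/
noncomputable def Dn {Ω : Type} (U : ℕ → Ω → ℝ) (ν : ℕ → Ω → ℕ) (n : ℕ) (ω : Ω) : ℕ :=
  D ((List.range n).map fun i => (U i ω, ν i ω))

/-- The uniform probability measure on the interval `(0,1)`. -/
noncomputable def unif01 : Measure ℝ := volume.restrict (Set.Ioo 0 1)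

noncomputable def aliveLabels (s : List (ℝ × ℕ)) : Finset ℝ :=
  ((s.filter fun p => 0 < p.2).map Prod.fst).toFinset

@[simp]
lemma mem_aliveLabels {s : List (ℝ × ℕ)} {z : ℝ} :
    z ∈ aliveLabels s ↔ ∃ p ∈ s, 0 < p.2 ∧ p.1 = z := by
  simp [aliveLabels]

lemma mem_aliveLabels_cons {a : ℝ × ℕ} {l : List (ℝ × ℕ)} {z : ℝ} :
    z ∈ aliveLabels (a :: l) ↔ (0 < a.2 ∧ a.1 = z) ∨ z ∈ aliveLabels l := by
  simp only [mem_aliveLabels, List.mem_cons, exists_eq_or_imp]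

noncomputable def parent (s : List (ℝ × ℕ)) (y : ℝ) : WithBot ℝ :=
  ((aliveLabels s).filter (· < y)).max

lemma parent_eq_argmax (s : List (ℝ × ℕ)) (y : ℝ) :
    parent s y =
      ((s.filter fun p => decide (0 < p.2 ∧ p.1 < y)).argmax Prod.fst).map Prod.fst := by
  cases h : (s.filter fun p => decide (0 < p.2 ∧ p.1 < y)).argmax Prod.fst with
  | none =>
    rw [List.argmax_eq_none, List.filter_eq_nil_iff] at h
    change _ = ⊥
    rw [parent, Finset.max_eq_bot, Finset.filter_eq_empty_iff]
    rintro _ hz hzy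
    obtain ⟨p, hp, hp₀, rfl⟩ := mem_aliveLabels.mp hz
    simp only [decide_eq_true_eq, not_and, not_lt] at h
    exact (h p hp hp₀).not_gt hzy
  | some q =>
    have hq := List.mem_filter.mp (List.argmax_mem h)
    simp only [decide_eq_true_eq] at hq
    refine le_antisymm (Finset.max_le ?_) (Finset.le_max ?_)
    · rintro _ hz
      obtain ⟨hz, hzy⟩ := Finset.mem_filter.mp hz
      obtain ⟨p, hp, hp₀, rfl⟩ := mem_aliveLabels.mp hz
      exact WithBot.coe_le_coe.mpr
        (List.le_of_mem_argmax (List.mem_filter.mpr ⟨hp, by simp [hp₀, hzy]⟩) h)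
    · exact Finset.mem_filter.mpr ⟨mem_aliveLabels.mpr ⟨q, hq.1, hq.2.1, rfl⟩, hq.2.2⟩

lemma step_of_parent_eq_bot {s : List (ℝ × ℕ)} {r : ℕ} {it : ℝ × ℕ}
    (h : parent s it.1 = ⊥) : step (s, r) it = (it :: s, r + 1) := by
  unfold step
  cases hq : (s.filter fun p => decide (0 < p.2 ∧ p.1 < it.1)).argmax Prod.fst with
  | none => rfl
  | some q => rw [parent_eq_argmax, hq] at h; cases h

lemma step_of_parent_eq_coe {s : List (ℝ × ℕ)} {r : ℕ} {it : ℝ × ℕ} {z : ℝ}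
    (h : parent s it.1 = z) : step (s, r) it = (it :: decrementAt s z, r) := by
  unfold step
  cases hq : (s.filter fun p => decide (0 < p.2 ∧ p.1 < it.1)).argmax Prod.fst with
  | none => rw [parent_eq_argmax, hq] at h; cases h
  | some q =>
    rw [parent_eq_argmax, hq] at h
    cases h
    rfl

def ExtraLife (s t : List (ℝ × ℕ)) : Prop :=
  ∃ p q x c, s = p ++ (x, c + 1) :: q ∧ t = p ++ (x, c) :: q

lemma ExtraLife.cons {s t : List (ℝ × ℕ)} (h : ExtraLife s t) (a : ℝ × ℕ) :
    ExtraLife (a :: s) (a :: t) := by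
  obtain ⟨p, q, x, c, rfl, rfl⟩ := h
  exact ⟨a :: p, q, x, c, rfl, rfl⟩

lemma decrementAt_of_not_mem_aliveLabels {l : List (ℝ × ℕ)} {z : ℝ}
    (h : z ∉ aliveLabels l) : decrementAt l z = l := by
  induction l with
  | nil => rfl
  | cons a l ih =>
    rw [mem_aliveLabels_cons, not_or] at h
    rw [decrementAt, if_neg (fun ha => h.1 ⟨ha.2, ha.1⟩), ih h.2]

lemma extraLife_decrementAt {l : List (ℝ × ℕ)} {z : ℝ} (h : z ∈ aliveLabels l) :
    ExtraLife l (decrementAt l z) := by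
  induction l with
  | nil => simp at h
  | cons a l ih =>
    by_cases ha : a.1 = z ∧ 0 < a.2
    · obtain ⟨⟨x, c⟩, rfl⟩ : ∃ b : ℝ × ℕ, a = (b.1, b.2 + 1) :=
        ⟨(a.1, a.2 - 1), by simp [Nat.sub_add_cancel ha.2]⟩
      rw [decrementAt, if_pos ha]
      exact ⟨[], l, x, c, rfl, rfl⟩
    · rw [decrementAt, if_neg ha]
      exact (ih ((mem_aliveLabels_cons.mp h).resolve_left fun h' => ha ⟨h'.2, h'.1⟩)).cons a

lemma aliveLabels_append_cons_succ (p q : List (ℝ × ℕ)) (x : ℝ) (c : ℕ) :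
    aliveLabels (p ++ (x, c + 1) :: q) = insert x (aliveLabels (p ++ (x, c) :: q)) := by
  ext z
  by_cases hz : z = x
  · subst hz
    simpa using ⟨c + 1, by simp⟩
  · simp [hz]

lemma decrementAt_append_cons_succ {p : List (ℝ × ℕ)} (q : List (ℝ × ℕ)) {x : ℝ} (c : ℕ)
    (hp : x ∉ aliveLabels p) : decrementAt (p ++ (x, c + 1) :: q) x = p ++ (x, c) :: q := by
  induction p with
  | nil => simp [decrementAt]
  | cons a p ih =>
    rw [mem_aliveLabels_cons, not_or] at hp
    rw [List.cons_append, decrementAt, if_neg (fun ha => hp.1 ⟨ha.2, ha.1⟩), ih hp.2,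
      List.cons_append]

lemma ExtraLife.exists_of_parent_ne {s t : List (ℝ × ℕ)} (h : ExtraLife s t) {y : ℝ}
    (hne : parent s y ≠ parent t y) : ∃ x : ℝ, parent s y = x ∧ decrementAt s x = t := by
  obtain ⟨p, q, x, c, rfl, rfl⟩ := h
  unfold parent at hne ⊢
  rw [aliveLabels_append_cons_succ] at hne ⊢
  have hx : x ∉ aliveLabels (p ++ (x, c) :: q) := fun hx =>
    hne (by rw [Finset.insert_eq_of_mem hx])
  refine ⟨x, ?_, decrementAt_append_cons_succ q c fun hxp => hx ?_⟩
  · rw [Finset.filter_insert] at hne ⊢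
    split_ifs at hne ⊢
    · rw [Finset.max_insert] at hne ⊢
      exact (max_choice _ _).resolve_right hne
    · exact absurd rfl hne
  · obtain ⟨a, ha, ha₀, rfl⟩ := mem_aliveLabels.mp hxp
    exact mem_aliveLabels.mpr ⟨a, List.mem_append_left _ ha, ha₀, rfl⟩

lemma ExtraLife.decrementAt {s t : List (ℝ × ℕ)} (h : ExtraLife s t) (z : ℝ) :
    ExtraLife (decrementAt s z) (decrementAt t z) ∨ decrementAt s z = decrementAt t z := by
  obtain ⟨p, q, x, c, rfl, rfl⟩ := h
  induction p with
  | nil =>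
    simp only [List.nil_append, HeapPatience.decrementAt]
    by_cases hxz : x = z
    · subst hxz
      rcases c with _ | c
      · simp only [true_and, Nat.lt_irrefl, and_false, if_false, Nat.succ_pos, if_true]
        by_cases hq : x ∈ aliveLabels q
        · exact .inl ((extraLife_decrementAt hq).cons _)
        · exact .inr (by rw [decrementAt_of_not_mem_aliveLabels hq])
      · simp only [true_and, Nat.succ_pos, if_true, Nat.add_sub_cancel]
        exact .inl ⟨[], q, x, c, rfl, rfl⟩
    · simp only [hxz, false_and, if_false]
      exact .inl ⟨[], _, x, c, rfl, rfl⟩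
  | cons a p ih =>
    simp only [List.cons_append, HeapPatience.decrementAt]
    split_ifs
    · exact .inl ⟨_ :: p, q, x, c, rfl, rfl⟩
    · exact ih.imp (·.cons a) (congrArg (a :: ·))

def Coupled (A B : List (ℝ × ℕ) × ℕ) : Prop :=
  (A.1 = B.1 ∧ A.2 ≤ B.2 ∧ B.2 ≤ A.2 + 1) ∨ (A.2 = B.2 ∧ ExtraLife A.1 B.1)

lemma Coupled.roots {A B : List (ℝ × ℕ) × ℕ} (h : Coupled A B) :
    A.2 ≤ B.2 ∧ B.2 ≤ A.2 + 1 := by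
  rcases h with ⟨-, h⟩ | ⟨h, -⟩
  exacts [h, ⟨h.le, by omega⟩]

lemma coupled_step_of_le (s : List (ℝ × ℕ)) {r r' : ℕ} (h₁ : r ≤ r') (h₂ : r' ≤ r + 1)
    (it : ℝ × ℕ) : Coupled (step (s, r) it) (step (s, r') it) := by
  cases hp : parent s it.1 using WithBot.recBotCoe with
  | bot =>
    rw [step_of_parent_eq_bot hp, step_of_parent_eq_bot hp]
    exact .inl ⟨rfl, by omega, by omega⟩
  | coe z =>
    rw [step_of_parent_eq_coe hp, step_of_parent_eq_coe hp]
    exact .inl ⟨rfl, h₁, h₂⟩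

lemma ExtraLife.coupled_step {s t : List (ℝ × ℕ)} (h : ExtraLife s t) (r : ℕ) (it : ℝ × ℕ) :
    Coupled (step (s, r) it) (step (t, r) it) := by
  by_cases hpar : parent s it.1 = parent t it.1
  · cases hp : parent t it.1 using WithBot.recBotCoe with
    | bot =>
      rw [step_of_parent_eq_bot (hpar.trans hp), step_of_parent_eq_bot hp]
      exact .inr ⟨rfl, h.cons it⟩
    | coe z =>
      rw [step_of_parent_eq_coe (hpar.trans hp), step_of_parent_eq_coe hp]
      rcases h.decrementAt z with h' | h'
      · exact .inr ⟨rfl, h'.cons it⟩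
      · exact .inl ⟨by rw [h'], le_rfl, Nat.le_succ r⟩
  · obtain ⟨x, hx, hdec⟩ := h.exists_of_parent_ne hpar
    rw [step_of_parent_eq_coe hx, hdec]
    cases hp : parent t it.1 using WithBot.recBotCoe with
    | bot =>
      rw [step_of_parent_eq_bot hp]
      exact .inl ⟨rfl, Nat.le_succ r, le_rfl⟩
    | coe z =>
      rw [step_of_parent_eq_coe hp]
      have hz : z ∈ aliveLabels t := (Finset.mem_filter.mp (Finset.mem_of_max hp)).1
      exact .inr ⟨rfl, (extraLife_decrementAt hz).cons it⟩

lemma Coupled.step {A B : List (ℝ × ℕ) × ℕ} (h : Coupled A B) (it : ℝ × ℕ) :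
    Coupled (step A it) (step B it) := by
  obtain ⟨s, r⟩ := A
  obtain ⟨t, r'⟩ := B
  rcases h with ⟨rfl, h₁, h₂⟩ | ⟨rfl, h⟩
  exacts [coupled_step_of_le s h₁ h₂ it, h.coupled_step r it]

lemma Coupled.foldl {A B : List (ℝ × ℕ) × ℕ} (h : Coupled A B) (l : List (ℝ × ℕ)) :
    Coupled (l.foldl HeapPatience.step A) (l.foldl HeapPatience.step B) := by
  induction l generalizing A B with
  | nil => exact h
  | cons it l ih => exact ih (h.step it)

lemma coupled_step_succ (A : List (ℝ × ℕ) × ℕ) (x : ℝ) (c : ℕ) :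
    Coupled (step A (x, c + 1)) (step A (x, c)) := by
  cases hp : parent A.1 x using WithBot.recBotCoe with
  | bot =>
    rw [step_of_parent_eq_bot hp, step_of_parent_eq_bot hp]
    exact .inr ⟨rfl, [], A.1, x, c, rfl, rfl⟩
  | coe z =>
    rw [step_of_parent_eq_coe hp, step_of_parent_eq_coe hp]
    exact .inr ⟨rfl, [], _, x, c, rfl, rfl⟩

theorem R_append_cons_succ (l₁ l₂ : List (ℝ × ℕ)) (x : ℝ) (c : ℕ) :
    R (l₁ ++ (x, c + 1) :: l₂) ≤ R (l₁ ++ (x, c) :: l₂) ∧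
      R (l₁ ++ (x, c) :: l₂) ≤ R (l₁ ++ (x, c + 1) :: l₂) + 1 := by
  simpa only [R, run, List.foldl_append, List.foldl_cons] using
    ((coupled_step_succ (run l₁) x c).foldl l₂).roots

lemma map_append_cons_of_nodup {ι α : Type*} {pre post : List ι} {i₀ : ι}
    (hl : (pre ++ i₀ :: post).Nodup) {f g : ι → α} (hfg : ∀ i, i ≠ i₀ → f i = g i) :
    (pre ++ i₀ :: post).map f = pre.map g ++ f i₀ :: post.map g := by
  have hpre : i₀ ∉ pre := fun h => List.disjoint_of_nodup_append hl h List.mem_cons_self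
  have hpost : i₀ ∉ post := (List.nodup_cons.mp hl.of_append_right).1
  rw [List.map_append, List.map_cons,
    List.map_congr_left fun i hi => hfg i (ne_of_mem_of_not_mem hi hpre),
    List.map_congr_left fun i hi => hfg i (ne_of_mem_of_not_mem hi hpost)]

theorem R_extra_life_step_general
    (n : ℕ) (u : Fin n → ℝ)
    (i₀ : Fin n) (v : Fin n → ℕ)
    (Rm : ℕ → ℕ)
    (hRm : ∀ m : ℕ,
      Rm m = R ((List.finRange n).map fun i => (u i, if i = i₀ then m else v i))) :
    ∀ m : ℕ, 2 ≤ m → Rm m ≤ Rm (m - 1) ∧ Rm (m - 1) ≤ Rm m + 1 := by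
  intro m hm
  obtain ⟨c, rfl⟩ : ∃ c, m = c + 1 := ⟨m - 1, by omega⟩
  obtain ⟨pre, post, hsplit⟩ := List.append_of_mem (List.mem_finRange i₀)
  have hnodup : (pre ++ i₀ :: post).Nodup := hsplit ▸ List.nodup_finRange n
  have items (k : ℕ) :
      (List.finRange n).map (fun i => (u i, if i = i₀ then k else v i)) =
        pre.map (fun i => (u i, v i)) ++ (u i₀, k) :: post.map (fun i => (u i, v i)) := by
    rw [hsplit, map_append_cons_of_nodup (g := fun i => (u i, v i)) hnodup
      fun i hi => by simp [hi], if_pos rfl]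
  rw [hRm, hRm, Nat.add_sub_cancel, items, items]
  exact R_append_cons_succ _ _ _ c

/-- Adding one life to a single fixed item decreases the number of heaps
by at most one: for `m ≥ 2`, `R_m - R_(m-1) ∈ {-1, 0}`. -/
theorem R_extra_life_step
    (n : ℕ) (hn : 1 ≤ n) (u : Fin n → ℝ)
    (hu : ∀ i, u i ∈ Set.Ioo (0 : ℝ) 1) (huinj : Function.Injective u)
    (i₀ : Fin n) (v : Fin n → ℕ) (hv : ∀ i, i ≠ i₀ → 1 ≤ v i)
    (Rm : ℕ → ℕ)
    (hRm : ∀ m : ℕ,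
      Rm m = R ((List.finRange n).map fun i => (u i, if i = i₀ then m else v i))) :
    ∀ m : ℕ, 2 ≤ m → Rm m ≤ Rm (m - 1) ∧ Rm (m - 1) ≤ Rm m + 1 :=
  R_extra_life_step_general n u i₀ v Rm hRm

end HeapPatience
end

section
/- Fix n ≥ 1 and pairwise distinct labels u_1,…,u_n ∈ (0,1). If v_i and v'_i are positive integers with v_i ≤ v'_i for every i, then R((u_i,v'_i)_{1≤i≤n}) ≤ R((u_i,v_i)_{1≤i≤n}): giving each item at least as many lives produces at most as many heaps. -/
open MeasureTheory ProbabilityTheory Filter Topology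
open scoped ENNReal NNReal

namespace HeapPatience

/-!
Run the algorithm on both sequences side by side. The invariant is that the two forests carry
the same labels in the same order and that every vertex has at least as many remaining lives
in the second run as in the first. Then every vertex alive in the first run is alive in the
second, so whenever the first run finds a parent for an item, so does the second: the second run
never creates a root unless the first does. The invariant survives a step because the second run
attaches to a parent whose label is at least that of the first run's parent; if it is strictly
larger, that vertex is already dead in the first run, so it can afford to lose a life.
-/

theorem _root_.List.Forall₂.exists_of_mem_left {α β : Type*} {R : α → β → Prop} :
    ∀ {l : List α} {l' : List β}, List.Forall₂ R l l' → ∀ {a}, a ∈ l → ∃ b ∈ l', R a b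
  | _, _, .cons hab _, _, .head _ => ⟨_, List.mem_cons_self, hab⟩
  | _, _, .cons _ h, _, .tail _ ha =>
    let ⟨b, hb, hab⟩ := h.exists_of_mem_left ha
    ⟨b, List.mem_cons_of_mem _ hb, hab⟩

def LivesLE (p p' : ℝ × ℕ) : Prop := p.1 = p'.1 ∧ p.2 ≤ p'.2

def IsDeadAt (s : List (ℝ × ℕ)) (y : ℝ) : Prop := ∀ p ∈ s, p.1 = y → p.2 = 0

lemma forall₂_decrementAt_left {s s' : List (ℝ × ℕ)} (h : List.Forall₂ LivesLE s s') (x : ℝ) :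
    List.Forall₂ LivesLE (decrementAt s x) s' := by
  induction h with
  | nil => exact .nil
  | @cons p p' rest rest' hp _ ih =>
    rw [decrementAt]
    split_ifs
    · exact .cons ⟨hp.1, (Nat.sub_le _ 1).trans hp.2⟩ ‹_›
    · exact .cons hp ih

lemma forall₂_decrementAt_right_of_isDeadAt {s s' : List (ℝ × ℕ)}
    (h : List.Forall₂ LivesLE s s') {y : ℝ} (hy : IsDeadAt s y) :
    List.Forall₂ LivesLE s (decrementAt s' y) := by
  induction h with
  | nil => exact .nil
  | @cons p p' rest rest' hp hrest ih =>
    rw [decrementAt]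
    split_ifs with hp'
    · have hp0 : p.2 = 0 := hy p List.mem_cons_self (hp.1.trans hp'.1)
      exact .cons ⟨hp.1, (Nat.le_of_eq hp0).trans (Nat.zero_le _)⟩ hrest
    · exact .cons hp (ih fun q hq => hy q (List.mem_cons_of_mem _ hq))

lemma forall₂_decrementAt {s s' : List (ℝ × ℕ)} (h : List.Forall₂ LivesLE s s') (x : ℝ) :
    List.Forall₂ LivesLE (decrementAt s x) (decrementAt s' x) := by
  induction h with
  | nil => exact .nil
  | @cons p p' rest rest' hp hrest ih =>
    rw [decrementAt, decrementAt]
    by_cases hpx : p.1 = x ∧ 0 < p.2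
    · have hp'x : p'.1 = x ∧ 0 < p'.2 := ⟨hp.1 ▸ hpx.1, hpx.2.trans_le hp.2⟩
      rw [if_pos hpx, if_pos hp'x]
      exact .cons ⟨hp.1, Nat.sub_le_sub_right hp.2 1⟩ hrest
    · rw [if_neg hpx]
      split_ifs with hp'x
      · have hp0 : p.2 = 0 := Nat.eq_zero_of_not_pos fun h => hpx ⟨hp.1.trans hp'x.1, h⟩
        exact .cons ⟨hp.1, (Nat.le_of_eq hp0).trans (Nat.zero_le _)⟩
          (forall₂_decrementAt_left hrest x)
      · exact .cons hp ih

noncomputable def candidates (s : List (ℝ × ℕ)) (x : ℝ) : List (ℝ × ℕ) :=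
  s.filter fun p => decide (0 < p.2 ∧ p.1 < x)

lemma step_of_argmax_eq_none {s : List (ℝ × ℕ)} {r : ℕ} {it : ℝ × ℕ}
    (h : (candidates s it.1).argmax Prod.fst = none) : step (s, r) it = (it :: s, r + 1) := by
  unfold step; rw [candidates] at h; rw [h]

lemma step_of_argmax_eq_some {s : List (ℝ × ℕ)} {r : ℕ} {it q : ℝ × ℕ}
    (h : (candidates s it.1).argmax Prod.fst = some q) :
    step (s, r) it = (it :: decrementAt s q.1, r) := by
  unfold step; rw [candidates] at h; rw [h]

lemma exists_argmax_candidates_of_mem {s : List (ℝ × ℕ)} {x : ℝ} {p : ℝ × ℕ} (hp : p ∈ s)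
    (hp₂ : 0 < p.2) (hpx : p.1 < x) : ∃ q ∈ (candidates s x).argmax Prod.fst, p.1 ≤ q.1 := by
  have hpc : p ∈ candidates s x := List.mem_filter.mpr ⟨hp, by simp [hp₂, hpx]⟩
  rcases hq : (candidates s x).argmax Prod.fst with _ | q
  · exact absurd (List.argmax_eq_none.mp hq) (List.ne_nil_of_mem hpc)
  · exact ⟨q, rfl, List.le_of_mem_argmax hpc hq⟩

lemma argmax_candidates_spec {s : List (ℝ × ℕ)} {x : ℝ} {q : ℝ × ℕ}
    (hq : (candidates s x).argmax Prod.fst = some q) : q ∈ s ∧ 0 < q.2 ∧ q.1 < x := by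
  simpa using List.mem_filter.mp (List.argmax_mem (Option.mem_def.mpr hq))

lemma exists_argmax_candidates_of_forall₂ {s s' : List (ℝ × ℕ)} (hs : List.Forall₂ LivesLE s s')
    {x : ℝ} {q : ℝ × ℕ} (hq : (candidates s x).argmax Prod.fst = some q) :
    ∃ q' ∈ (candidates s' x).argmax Prod.fst, q.1 ≤ q'.1 := by
  obtain ⟨hqs, hq₂, hqx⟩ := argmax_candidates_spec hq
  obtain ⟨p', hp', hqp', hqp'₂⟩ := hs.exists_of_mem_left hqs
  rw [hqp']
  exact exists_argmax_candidates_of_mem hp' (hq₂.trans_le hqp'₂) (hqp' ▸ hqx)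

lemma isDeadAt_of_argmax_candidates {s : List (ℝ × ℕ)} {x y : ℝ} (hyx : y < x)
    (hy : ∀ q ∈ (candidates s x).argmax Prod.fst, q.1 < y) : IsDeadAt s y := by
  intro p hp hpy
  by_contra hp₂
  obtain ⟨q, hq, hpq⟩ := exists_argmax_candidates_of_mem hp (Nat.pos_of_ne_zero hp₂) (hpy ▸ hyx)
  exact (hpq.trans_lt (hy q hq)).ne hpy

def Dominated (acc acc' : List (ℝ × ℕ) × ℕ) : Prop :=
  List.Forall₂ LivesLE acc.1 acc'.1 ∧ acc'.2 ≤ acc.2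

lemma dominated_step {acc acc' : List (ℝ × ℕ) × ℕ} {it it' : ℝ × ℕ}
    (h : Dominated acc acc') (hit : LivesLE it it') : Dominated (step acc it) (step acc' it') := by
  obtain ⟨s, r⟩ := acc
  obtain ⟨s', r'⟩ := acc'
  obtain ⟨hs, hr⟩ := h
  obtain ⟨x, a⟩ := it
  obtain ⟨x', a'⟩ := it'
  obtain ⟨rfl : x = x', ha : a ≤ a'⟩ := hit
  have hnew : LivesLE (x, a) (x, a') := ⟨rfl, ha⟩
  rcases hA' : (candidates s' x).argmax Prod.fst with _ | q'
  · have hA : (candidates s x).argmax Prod.fst = none := by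
      rcases hA : (candidates s x).argmax Prod.fst with _ | q
      · rfl
      obtain ⟨_, hq', -⟩ := exists_argmax_candidates_of_forall₂ hs hA
      simp [hA'] at hq'
    rw [step_of_argmax_eq_none hA, step_of_argmax_eq_none hA']
    exact ⟨.cons hnew hs, Nat.succ_le_succ hr⟩
  obtain ⟨-, -, hq'x⟩ := argmax_candidates_spec hA'
  rw [step_of_argmax_eq_some (s := s') (r := r') hA']
  rcases hA : (candidates s x).argmax Prod.fst with _ | q
  · have hdead : IsDeadAt s q'.1 := isDeadAt_of_argmax_candidates hq'x (by simp [hA])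
    rw [step_of_argmax_eq_none hA]
    exact ⟨.cons hnew (forall₂_decrementAt_right_of_isDeadAt hs hdead), hr.trans r.le_succ⟩
  rw [step_of_argmax_eq_some hA]
  refine ⟨.cons hnew ?_, hr⟩
  obtain ⟨q'', hq'', hqq''⟩ := exists_argmax_candidates_of_forall₂ hs hA
  obtain rfl : q' = q'' := by simpa [hA'] using hq''
  rcases hqq''.eq_or_lt with heq | hlt
  · rw [← heq]
    exact forall₂_decrementAt hs q.1
  · have hdead : IsDeadAt s q'.1 :=
      isDeadAt_of_argmax_candidates hq'x (by simpa [hA] using hlt)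
    exact forall₂_decrementAt_left (forall₂_decrementAt_right_of_isDeadAt hs hdead) q.1

lemma dominated_run {l l' : List (ℝ × ℕ)} (h : List.Forall₂ LivesLE l l') :
    Dominated (run l) (run l') :=
  @List.rel_foldl _ _ _ _ LivesLE Dominated step step
    (fun _ _ hacc _ _ hit => dominated_step hacc hit) _ _ ⟨.nil, le_rfl⟩ _ _ h

theorem R_antitone_in_lives_general
    (n : ℕ) (u : Fin n → ℝ)
    (v v' : Fin n → ℕ) (hle : ∀ i, v i ≤ v' i) :
    R ((List.finRange n).map fun i => (u i, v' i))
      ≤ R ((List.finRange n).map fun i => (u i, v i)) := by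
  refine (dominated_run ?_).2
  rw [List.forall₂_map_left_iff, List.forall₂_map_right_iff, List.forall₂_same]
  exact fun i _ => ⟨rfl, hle i⟩

/-- Giving each item at least as many lives produces at most as many heaps. -/
theorem R_antitone_in_lives
    (n : ℕ) (u : Fin n → ℝ)
    (hu : ∀ i, u i ∈ Set.Ioo (0 : ℝ) 1) (huinj : Function.Injective u)
    (v v' : Fin n → ℕ) (hv : ∀ i, 1 ≤ v i) (hle : ∀ i, v i ≤ v' i) :
    R ((List.finRange n).map fun i => (u i, v' i))
      ≤ R ((List.finRange n).map fun i => (u i, v i)) :=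
  R_antitone_in_lives_general n u v v' hle

end HeapPatience
end

section
/- Let μ and μ' be probability distributions on {1,2,…} such that μ stochastically dominates μ', i.e. μ({k,k+1,…}) ≥ μ'({k,k+1,…}) for every k ≥ 1. Denote by 𝐑_μ(n) and 𝐑_{μ'}(n) the number of heaps needed to sort the first n items when the i.i.d. lives have law μ and μ' respectively (with the same i.i.d. uniform labels). Then E[𝐑_μ(n)] ≤ E[𝐑_{μ'}(n)] for every n ≥ 1. -/
/-!
Run the algorithm on the same labels with two life vectors, one pointwise larger than the other.
After every step the richer configuration still has at least as many lives at each position: its set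
of alive labels below the incoming item is larger, so it attaches the item whenever the poorer one
does, and the particle that loses a life in the richer configuration is either dead in the poorer
one or the very particle that the poorer one uses. Hence `R` is antitone in every life coordinate.
Lives are independent of the labels and of each other, so the lives of the items can be resampled
from `μ'` instead of `μ` one coordinate at a time (Fubini), and an antitone function of one
coordinate has a smaller mean under the stochastically larger law. Measurability of `R` holds
because it depends on the labels only through their relative order.
-/

open MeasureTheory ProbabilityTheory Filter Topology
open scoped ENNReal NNReal

namespace HeapPatience

def aliveBelow (s : List (ℝ × ℕ)) (u : ℝ) : Set ℝ :=
  {x | ∃ p ∈ s, 0 < p.2 ∧ p.1 = x ∧ x < u}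

lemma step_cases (s : List (ℝ × ℕ)) (r : ℕ) (it : ℝ × ℕ) :
    (aliveBelow s it.1 = ∅ ∧ step (s, r) it = (it :: s, r + 1)) ∨
      ∃ y, IsGreatest (aliveBelow s it.1) y ∧ step (s, r) it = (it :: decrementAt s y, r) := by
  unfold step
  dsimp only
  rcases h : (s.filter fun p => decide (0 < p.2 ∧ p.1 < it.1)).argmax Prod.fst with _ | q
  · refine .inl ⟨Set.eq_empty_of_forall_notMem ?_, by simp only [h]⟩
    rintro _ ⟨p, hp, hp2, rfl, hpu⟩
    rw [List.argmax_eq_none, List.filter_eq_nil_iff] at h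
    exact h p hp (by simp [hp2, hpu])
  · obtain ⟨hqs, hq2, hqu⟩ : q ∈ s ∧ 0 < q.2 ∧ q.1 < it.1 := by
      simpa using List.argmax_mem h
    refine .inr ⟨q.1, ⟨⟨q, hqs, hq2, rfl, hqu⟩, ?_⟩, by simp only [h]⟩
    rintro _ ⟨p, hp, hp2, rfl, hpu⟩
    exact List.le_of_mem_argmax (List.mem_filter.mpr ⟨hp, by simp [hp2, hpu]⟩) h

lemma map_fst_decrementAt (s : List (ℝ × ℕ)) (a : ℝ) :
    (decrementAt s a).map Prod.fst = s.map Prod.fst := by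
  induction s with
  | nil => rfl
  | cons p s ih => unfold decrementAt; split_ifs <;> simp [ih]

lemma map_fst_step (s : List (ℝ × ℕ)) (r : ℕ) (it : ℝ × ℕ) :
    (step (s, r) it).1.map Prod.fst = it.1 :: s.map Prod.fst := by
  rcases step_cases s r it with ⟨-, h⟩ | ⟨y, -, h⟩ <;> simp [h, map_fst_decrementAt]

lemma foldl_step_snd_le (l s : List (ℝ × ℕ)) (r : ℕ) :
    (l.foldl step (s, r)).2 ≤ r + l.length := by
  induction l generalizing s r with
  | nil => simp
  | cons it l ih =>
    rw [List.foldl_cons, List.length_cons]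
    rcases step_cases s r it with ⟨-, h⟩ | ⟨y, -, h⟩ <;> rw [h] <;> grind

lemma R_le_length (l : List (ℝ × ℕ)) : R l ≤ l.length := by
  simpa [R, run] using foldl_step_snd_le l [] 0

def MoreLives : List (ℝ × ℕ) → List (ℝ × ℕ) → Prop :=
  List.Forall₂ fun p q => p.1 = q.1 ∧ q.2 ≤ p.2

namespace MoreLives

variable {s t : List (ℝ × ℕ)}

lemma aliveBelow_subset (h : MoreLives s t) (u : ℝ) : aliveBelow t u ⊆ aliveBelow s u := by
  induction h with
  | nil => exact fun _ hx => hx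
  | @cons p q s t hpq _ ih =>
    rintro _ ⟨q', hq', hq2, rfl, hu⟩
    rcases List.mem_cons.mp hq' with rfl | hq'
    · exact ⟨p, List.mem_cons_self, hq2.trans_le hpq.2, hpq.1, hu⟩
    · obtain ⟨p', hp', hp'q⟩ := ih ⟨q', hq', hq2, rfl, hu⟩
      exact ⟨p', List.mem_cons_of_mem _ hp', hp'q⟩

lemma decrementAt_right (h : MoreLives s t) (b : ℝ) : MoreLives s (decrementAt t b) := by
  induction h with
  | nil => exact .nil
  | @cons p q s t hpq hst ih =>
    unfold decrementAt
    split_ifs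
    · exact .cons ⟨hpq.1, (Nat.sub_le _ _).trans hpq.2⟩ hst
    · exact .cons hpq ih

lemma decrementAt_left (h : MoreLives s t) {a : ℝ} (ha : ∀ q ∈ t, 0 < q.2 → q.1 ≠ a) :
    MoreLives (decrementAt s a) t := by
  induction h with
  | nil => exact .nil
  | @cons p q s t hpq hst ih =>
    unfold decrementAt
    split_ifs with hp
    · have hq : q.2 = 0 := by
        by_contra hq
        exact ha q List.mem_cons_self (Nat.pos_of_ne_zero hq) (hpq.1 ▸ hp.1)
      exact .cons ⟨hpq.1, by omega⟩ hst
    · exact .cons hpq (ih fun q' hq' => ha q' (List.mem_cons_of_mem _ hq'))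

lemma decrementAt (h : MoreLives s t) {a b : ℝ}
    (hab : ∀ q ∈ t, 0 < q.2 → q.1 = a → b = a) :
    MoreLives (decrementAt s a) (decrementAt t b) := by
  induction h with
  | nil => exact .nil
  | @cons p q s t hpq hst ih =>
    have hab' : ∀ q' ∈ t, 0 < q'.2 → q'.1 = a → b = a :=
      fun q' hq' => hab q' (List.mem_cons_of_mem _ hq')
    unfold HeapPatience.decrementAt
    split_ifs with hp hq hq
    · exact .cons ⟨hpq.1, by omega⟩ hst
    · have hq0 : q.2 = 0 := by
        by_contra hq0
        have hqa : q.1 = a := hpq.1 ▸ hp.1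
        exact hq ⟨hqa.trans (hab q List.mem_cons_self (by omega) hqa).symm, by omega⟩
      exact .cons ⟨hpq.1, by omega⟩ (decrementAt_right hst b)
    · have hba : b ≠ a := fun hba => hp ⟨hpq.1.trans (hq.1.trans hba), hq.2.trans_le hpq.2⟩
      exact .cons ⟨hpq.1, by omega⟩
        (decrementAt_left hst fun q' hq' hq'2 hq'a => hba (hab' q' hq' hq'2 hq'a))
    · exact .cons hpq (ih hab')

lemma step (h : MoreLives s t) {u : ℝ} {k k' : ℕ} (hk : k' ≤ k) {r r' : ℕ} (hr : r ≤ r') :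
    MoreLives (HeapPatience.step (s, r) (u, k)).1 (HeapPatience.step (t, r') (u, k')).1 ∧
      (HeapPatience.step (s, r) (u, k)).2 ≤ (HeapPatience.step (t, r') (u, k')).2 := by
  have hit : (u, k).1 = (u, k').1 ∧ (u, k').2 ≤ (u, k).2 := ⟨rfl, hk⟩
  have hsub := h.aliveBelow_subset u
  rcases step_cases s r (u, k) with ⟨hs, hstep⟩ | ⟨a, ha, hstep⟩ <;>
    rcases step_cases t r' (u, k') with ⟨ht, hstep'⟩ | ⟨b, hb, hstep'⟩ <;>
    rw [hstep, hstep']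
  · exact ⟨.cons hit h, by simp [hr]⟩
  · exact absurd (hsub hb.1) (hs ▸ Set.notMem_empty b)
  · obtain ⟨-, -, -, -, hau⟩ := ha.1
    refine ⟨.cons hit (h.decrementAt_left fun q hq hq2 hqa => ?_), by simp; omega⟩
    exact ht.subset ⟨q, hq, hq2, hqa, hqa ▸ hau⟩ |>.elim
  · obtain ⟨-, -, -, -, hau⟩ := ha.1
    refine ⟨.cons hit (h.decrementAt fun q hq hq2 hqa => ?_), hr⟩
    exact le_antisymm (hb.mono ha hsub) (hb.2 ⟨q, hq, hq2, hqa, hqa ▸ hau⟩)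

end MoreLives

lemma foldl_step_snd_mono {l l' s t : List (ℝ × ℕ)} (hl : MoreLives l l')
    (hst : MoreLives s t) {r r' : ℕ} (hr : r ≤ r') :
    (l.foldl step (s, r)).2 ≤ (l'.foldl step (t, r')).2 := by
  induction hl generalizing s t r r' with
  | nil => exact hr
  | @cons p p' _ _ hp _ ih =>
    obtain ⟨u, k⟩ := p
    obtain ⟨_, k'⟩ := p'
    obtain ⟨rfl, hk⟩ := hp
    obtain ⟨hst', hr'⟩ := hst.step hk hr
    exact ih hst' hr'

lemma R_le_of_moreLives {l l' : List (ℝ × ℕ)} (h : MoreLives l l') : R l ≤ R l' :=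
  foldl_step_snd_mono h .nil le_rfl

section Relabel

variable {f : ℝ → ℝ} {S : Set ℝ}

lemma decrementAt_map (hf : Set.InjOn f S) {s : List (ℝ × ℕ)} (hs : ∀ p ∈ s, p.1 ∈ S)
    {a : ℝ} (ha : a ∈ S) :
    decrementAt (s.map (Prod.map f id)) (f a) = (decrementAt s a).map (Prod.map f id) := by
  induction s with
  | nil => rfl
  | cons p s ih =>
    have hfp : f p.1 = f a ↔ p.1 = a := hf.eq_iff (hs p List.mem_cons_self) ha
    simp only [List.map_cons, decrementAt, Prod.map_fst, Prod.map_snd, id, hfp]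
    split_ifs
    · rfl
    · rw [ih fun q hq => hs q (List.mem_cons_of_mem _ hq), List.map_cons]

lemma aliveBelow_map (hf : StrictMonoOn f S) {s : List (ℝ × ℕ)} (hs : ∀ p ∈ s, p.1 ∈ S)
    {u : ℝ} (hu : u ∈ S) :
    aliveBelow (s.map (Prod.map f id)) (f u) = f '' aliveBelow s u := by
  ext y
  simp only [aliveBelow, List.mem_map, Set.mem_image, Set.mem_ofPred_eq]
  constructor
  · rintro ⟨_, ⟨p, hp, rfl⟩, hp2, rfl, hpu⟩
    exact ⟨p.1, ⟨p, hp, hp2, rfl, (hf.lt_iff_lt (hs p hp) hu).1 hpu⟩, rfl⟩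
  · rintro ⟨_, ⟨p, hp, hp2, rfl, hpu⟩, rfl⟩
    exact ⟨_, ⟨p, hp, rfl⟩, hp2, rfl, (hf.lt_iff_lt (hs p hp) hu).2 hpu⟩

lemma step_map (hf : StrictMonoOn f S) {s : List (ℝ × ℕ)} (hs : ∀ p ∈ s, p.1 ∈ S) (r : ℕ)
    {it : ℝ × ℕ} (hit : it.1 ∈ S) :
    step (s.map (Prod.map f id), r) (Prod.map f id it) =
      ((step (s, r) it).1.map (Prod.map f id), (step (s, r) it).2) := by
  have hbelow := aliveBelow_map hf hs hit
  have hsub : aliveBelow s it.1 ⊆ S := fun _ ⟨p, hp, _, hpy, _⟩ => hpy ▸ hs p hp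
  have hcases := step_cases (s.map (Prod.map f id)) r (Prod.map f id it)
  rw [Prod.map_fst, hbelow] at hcases
  rcases step_cases s r it with ⟨h, hstep⟩ | ⟨y, hy, hstep⟩ <;>
    rcases hcases with ⟨h', hstep'⟩ | ⟨y', hy', hstep'⟩ <;> rw [hstep, hstep']
  · simp
  · rw [h, Set.image_empty] at hy'
    exact absurd hy'.1 (Set.notMem_empty y')
  · rw [Set.image_eq_empty.1 h'] at hy
    exact absurd hy.1 (Set.notMem_empty y)
  · rw [hy'.unique ((hf.mono hsub).monotoneOn.map_isGreatest hy),
      decrementAt_map hf.injOn hs (hsub hy.1)]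
    simp

lemma foldl_step_map (hf : StrictMonoOn f S) {l : List (ℝ × ℕ)} (hl : ∀ p ∈ l, p.1 ∈ S)
    {s : List (ℝ × ℕ)} (hs : ∀ p ∈ s, p.1 ∈ S) (r : ℕ) :
    (l.map (Prod.map f id)).foldl step (s.map (Prod.map f id), r) =
      ((l.foldl step (s, r)).1.map (Prod.map f id), (l.foldl step (s, r)).2) := by
  induction l generalizing s r with
  | nil => rfl
  | cons it l ih =>
    have hit := hl it List.mem_cons_self
    rw [List.map_cons, List.foldl_cons, List.foldl_cons, step_map hf hs r hit]
    refine ih (fun p hp => hl p (List.mem_cons_of_mem _ hp)) (fun p hp => ?_) _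
    have : p.1 ∈ (step (s, r) it).1.map Prod.fst := List.mem_map_of_mem hp
    rw [map_fst_step, List.mem_cons, List.mem_map] at this
    rcases this with h | ⟨q, hq, h⟩
    · exact h ▸ hit
    · exact h ▸ hs q hq

lemma R_map_of_strictMonoOn (hf : StrictMonoOn f S) {l : List (ℝ × ℕ)}
    (hl : ∀ p ∈ l, p.1 ∈ S) : R (l.map (Prod.map f id)) = R l := by
  simpa [R, run] using congrArg Prod.snd (foldl_step_map hf hl (s := []) (by simp) 0)

end Relabel

lemma R_ofFn_eq_of_lt_iff {n : ℕ} {v w : Fin n → ℝ × ℕ}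
    (hlt : ∀ i j, (v i).1 < (v j).1 ↔ (w i).1 < (w j).1) (hlives : ∀ i, (v i).2 = (w i).2) :
    R (List.ofFn v) = R (List.ofFn w) := by
  have heq : ∀ i j, (v i).1 = (v j).1 → (w i).1 = (w j).1 := fun i j h =>
    le_antisymm (not_lt.1 fun h' => ((hlt j i).2 h').ne h.symm)
      (not_lt.1 fun h' => ((hlt i j).2 h').ne h)
  let f : ℝ → ℝ := fun x => if h : ∃ i, (v i).1 = x then (w h.choose).1 else x
  have hf : ∀ i, f (v i).1 = (w i).1 := fun i => by
    have h : ∃ j, (v j).1 = (v i).1 := ⟨i, rfl⟩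
    simp only [f, dif_pos h]
    exact heq _ _ h.choose_spec
  have hmono : StrictMonoOn f (Set.range fun i => (v i).1) := by
    rintro _ ⟨i, rfl⟩ _ ⟨j, rfl⟩ hij
    simpa only [hf] using (hlt i j).1 hij
  have hw : List.ofFn w = (List.ofFn v).map (Prod.map f id) := by
    rw [List.map_ofFn]
    congr 1
    funext i
    exact Prod.ext (hf i).symm (hlives i).symm
  rw [hw, R_map_of_strictMonoOn hmono]
  intro p hp
  obtain ⟨i, rfl⟩ := List.mem_ofFn.1 hp
  exact ⟨i, rfl⟩

lemma measurable_R_ofFn (n : ℕ) : Measurable fun v : Fin n → ℝ × ℕ => R (List.ofFn v) := by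
  let pattern (v : Fin n → ℝ × ℕ) : (Fin n → Fin n → Bool) × (Fin n → ℕ) :=
    (fun i j => decide ((v i).1 < (v j).1), fun i => (v i).2)
  have hpattern : Measurable pattern := by
    refine .prodMk (measurable_pi_lambda _ fun i => measurable_pi_lambda _ fun j =>
      measurable_to_bool ?_) (measurable_pi_lambda _ fun i => by fun_prop)
    convert measurableSet_lt (f := fun v : Fin n → ℝ × ℕ => (v i).1)
      (g := fun v => (v j).1) (by fun_prop) (by fun_prop) using 1
    ext v
    simp
  have hfactor : (fun v => R (List.ofFn v)) =
      (fun p => R (List.ofFn (Function.invFun pattern p))) ∘ pattern := by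
    funext v
    have hv : pattern (Function.invFun pattern (pattern v)) = pattern v :=
      Function.invFun_eq ⟨v, rfl⟩
    refine R_ofFn_eq_of_lt_iff (fun i j => ?_) (fun i => ?_) |>.symm
    · simpa [pattern] using congrFun (congrFun (congrArg Prod.fst hv) i) j
    · exact congrFun (congrArg Prod.snd hv) i
  rw [hfactor]
  exact measurable_of_countable _ |>.comp hpattern

lemma eq_add_sum_range_tsub_of_monotone {G : ℕ → ℝ≥0∞} (hG : Monotone G) (k : ℕ) :
    G k = G 0 + ∑ j ∈ Finset.range k, (G (j + 1) - G j) := by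
  induction k with
  | zero => simp
  | succ k ih => rw [Finset.sum_range_succ, ← add_assoc, ← ih, add_tsub_cancel_of_le (hG k.le_succ)]

lemma eq_add_tsum_indicator_of_monotone {G : ℕ → ℝ≥0∞} (hG : Monotone G) (k : ℕ) :
    G k = G 0 + ∑' j, (Set.Ici (j + 1)).indicator (fun _ => G (j + 1) - G j) k := by
  rw [tsum_eq_sum (s := Finset.range k) fun j hj => Set.indicator_of_notMem
      (by simpa [Nat.succ_le_iff] using hj) _,
    Finset.sum_congr rfl fun j hj => Set.indicator_of_mem
      (by simpa [Nat.succ_le_iff] using hj) _]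
  exact eq_add_sum_range_tsub_of_monotone hG k

lemma lintegral_eq_add_tsum_of_monotone (ρ : Measure ℕ) {G : ℕ → ℝ≥0∞} (hG : Monotone G) :
    ∫⁻ k, G k ∂ρ = G 0 * ρ Set.univ + ∑' j, (G (j + 1) - G j) * ρ (Set.Ici (j + 1)) := by
  rw [lintegral_congr (eq_add_tsum_indicator_of_monotone hG), lintegral_add_left measurable_const,
    lintegral_const, lintegral_tsum fun _ => Measurable.of_discrete.aemeasurable]
  simp_rw [lintegral_indicator_const measurableSet_Ici]

section StochasticDomination

variable {μ μ' : Measure ℕ} [IsProbabilityMeasure μ] [IsProbabilityMeasure μ']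

lemma lintegral_le_of_monotone (hdom : ∀ k : ℕ, 1 ≤ k → μ' (Set.Ici k) ≤ μ (Set.Ici k))
    {G : ℕ → ℝ≥0∞} (hG : Monotone G) : ∫⁻ k, G k ∂μ' ≤ ∫⁻ k, G k ∂μ := by
  rw [lintegral_eq_add_tsum_of_monotone _ hG, lintegral_eq_add_tsum_of_monotone _ hG,
    measure_univ, measure_univ]
  exact add_le_add_right (ENNReal.tsum_le_tsum fun j => mul_le_mul_right (hdom _ j.succ_pos) _) _

lemma lintegral_le_of_antitone (hdom : ∀ k : ℕ, 1 ≤ k → μ' (Set.Ici k) ≤ μ (Set.Ici k))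
    {H : ℕ → ℝ≥0∞} (hH : Antitone H) (hH0 : H 0 ≠ ∞) : ∫⁻ k, H k ∂μ ≤ ∫⁻ k, H k ∂μ' := by
  have hG : Monotone fun k => H 0 - H k := fun _ _ hkl => tsub_le_tsub_left (hH hkl) _
  have hsum (ρ : Measure ℕ) [IsProbabilityMeasure ρ] :
      ∫⁻ k, H k ∂ρ + ∫⁻ k, H 0 - H k ∂ρ = H 0 := by
    rw [← lintegral_add_left Measurable.of_discrete]
    simp [add_tsub_cancel_of_le (hH (Nat.zero_le _))]
  have hfin : ∫⁻ k, H 0 - H k ∂μ ≠ ∞ :=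
    ne_top_of_le_ne_top hH0 <| (lintegral_mono fun _ => tsub_le_self).trans_eq (by simp)
  refine ENNReal.le_of_add_le_add_right hfin ?_
  calc ∫⁻ k, H k ∂μ + ∫⁻ k, H 0 - H k ∂μ = ∫⁻ k, H k ∂μ' + ∫⁻ k, H 0 - H k ∂μ' := by
        rw [hsum, hsum]
    _ ≤ ∫⁻ k, H k ∂μ' + ∫⁻ k, H 0 - H k ∂μ :=
        add_le_add_right (lintegral_le_of_monotone hdom hG) _

lemma piFinSuccAbove_zero_symm_eq_cons (Y : Type*) [MeasurableSpace Y] (n : ℕ) :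
    ⇑(MeasurableEquiv.piFinSuccAbove (fun _ : Fin (n + 1) => Y) 0).symm =
      fun p => Fin.cons p.1 p.2 := by
  funext p
  simp_rw [MeasurableEquiv.piFinSuccAbove_symm_apply, Fin.insertNthEquiv, Fin.insertNth_zero]
  rfl

lemma measurable_finCons (Y : Type*) [MeasurableSpace Y] (n : ℕ) :
    Measurable fun p : Y × (Fin n → Y) => (Fin.cons p.1 p.2 : Fin (n + 1) → Y) :=
  piFinSuccAbove_zero_symm_eq_cons Y n ▸ MeasurableEquiv.measurable _

lemma lintegral_pi_fin_succ {Y : Type*} [MeasurableSpace Y] (ρ : Measure Y) [SigmaFinite ρ]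
    {n : ℕ} {F : (Fin (n + 1) → Y) → ℝ≥0∞} (hF : Measurable F) :
    ∫⁻ v, F v ∂(Measure.pi fun _ => ρ) =
      ∫⁻ a, ∫⁻ b, F (Fin.cons a b) ∂(Measure.pi fun _ => ρ) ∂ρ := by
  rw [← (measurePreserving_piFinSuccAbove (fun _ : Fin (n + 1) => ρ) 0).symm.lintegral_comp hF,
    piFinSuccAbove_zero_symm_eq_cons,
    lintegral_prod (fun p => F (Fin.cons p.1 p.2)) (hF.comp (measurable_finCons Y n)).aemeasurable]

lemma lintegral_pi_le_of_antitone {X : Type*} [MeasurableSpace X] (α : Measure X)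
    [IsProbabilityMeasure α] (hdom : ∀ k : ℕ, 1 ≤ k → μ' (Set.Ici k) ≤ μ (Set.Ici k)) {n : ℕ}
    {F : (Fin n → X × ℕ) → ℝ≥0∞} (hF : Measurable F) {C : ℝ≥0∞} (hC : C ≠ ∞)
    (hFC : ∀ v, F v ≤ C)
    (hanti : ∀ v w, (∀ i, (v i).1 = (w i).1 ∧ (w i).2 ≤ (v i).2) → F v ≤ F w) :
    ∫⁻ v, F v ∂(Measure.pi fun _ => α.prod μ) ≤ ∫⁻ v, F v ∂(Measure.pi fun _ => α.prod μ') := by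
  induction n with
  | zero => rw [Measure.pi_of_empty, Measure.pi_of_empty]
  | succ n ih =>
    have hcons : Measurable fun p : (X × ℕ) × (Fin n → X × ℕ) => F (Fin.cons p.1 p.2) :=
      hF.comp (measurable_finCons _ n)
    have hinner := hcons.lintegral_prod_right' (ν := Measure.pi fun _ : Fin n => α.prod μ')
    rw [lintegral_pi_fin_succ _ hF, lintegral_pi_fin_succ _ hF]
    calc ∫⁻ a, ∫⁻ b, F (Fin.cons a b) ∂(Measure.pi fun _ => α.prod μ) ∂(α.prod μ)
        ≤ ∫⁻ a, ∫⁻ b, F (Fin.cons a b) ∂(Measure.pi fun _ => α.prod μ') ∂(α.prod μ) := by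
          refine lintegral_mono fun a => ih (hcons.comp measurable_prodMk_left) (fun _ => hFC _)
            fun v w h => hanti _ _ fun i => ?_
          refine Fin.cases ⟨rfl, le_rfl⟩ (fun i => ?_) i
          simpa using h i
      _ ≤ ∫⁻ a, ∫⁻ b, F (Fin.cons a b) ∂(Measure.pi fun _ => α.prod μ') ∂(α.prod μ') := by
          rw [lintegral_prod _ hinner.aemeasurable, lintegral_prod _ hinner.aemeasurable]
          refine lintegral_mono fun x => lintegral_le_of_antitone hdom
            (fun k l hkl => lintegral_mono fun b => hanti _ _ fun i => ?_) ?_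
          · refine Fin.cases ⟨rfl, hkl⟩ (fun _ => ⟨rfl, le_rfl⟩) i
          · refine ne_top_of_le_ne_top hC ((lintegral_mono fun _ => hFC _).trans_eq ?_)
            simp

end StochasticDomination

instance : IsProbabilityMeasure unif01 := ⟨by simp [unif01]⟩

lemma moreLives_ofFn {n : ℕ} {v w : Fin n → ℝ × ℕ}
    (h : ∀ i, (v i).1 = (w i).1 ∧ (w i).2 ≤ (v i).2) : MoreLives (List.ofFn v) (List.ofFn w) :=
  List.forall₂_iff_get.2 ⟨by simp, fun i hi _ => by simpa using h ⟨i, by simpa using hi⟩⟩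

lemma Rn_eq_R_ofFn {Ω : Type} (U : ℕ → Ω → ℝ) (ν : ℕ → Ω → ℕ) (n : ℕ) (ω : Ω) :
    Rn U ν n ω = R (List.ofFn fun i : Fin n => (U i ω, ν i ω)) := by
  rw [Rn, List.ofFn_eq_map, ← List.map_coe_finRange_eq_range, List.map_map]
  rfl

lemma map_fin_eq_pi {Ω β : Type*} [MeasurableSpace Ω] [MeasurableSpace β] {P : Measure Ω}
    [IsProbabilityMeasure P] {X : ℕ → Ω → β} (hX : ∀ i, Measurable (X i)) (hindep : iIndepFun X P)
    {ρ : Measure β} (hlaw : ∀ i, P.map (X i) = ρ) (n : ℕ) :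
    P.map (fun ω (i : Fin n) => X i ω) = Measure.pi fun _ => ρ := by
  rw [(iIndepFun_iff_map_fun_eq_pi_map (f := fun i : Fin n => X i)
    fun i => (hX i).aemeasurable).1 (hindep.precomp Fin.val_injective)]
  simp [hlaw]

lemma integral_Rn_eq_lintegral {Ω : Type} [MeasurableSpace Ω] {P : Measure Ω}
    [IsProbabilityMeasure P] {U : ℕ → Ω → ℝ} {ν : ℕ → Ω → ℕ}
    (hmeas : ∀ i, Measurable fun ω => (U i ω, ν i ω))
    (hindep : iIndepFun (fun i ω => (U i ω, ν i ω)) P) {ρ : Measure (ℝ × ℕ)}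
    (hlaw : ∀ i, P.map (fun ω => (U i ω, ν i ω)) = ρ) (n : ℕ) :
    ∫ ω, (Rn U ν n ω : ℝ) ∂P =
      (∫⁻ v, (R (List.ofFn v) : ℝ≥0∞) ∂(Measure.pi fun _ : Fin n => ρ)).toReal := by
  have hR : Measurable fun v : Fin n → ℝ × ℕ => (R (List.ofFn v) : ℝ≥0∞) :=
    Measurable.of_discrete.comp (measurable_R_ofFn n)
  have hX : Measurable fun ω (i : Fin n) => (U i ω, ν i ω) :=
    measurable_pi_lambda _ fun i => hmeas i
  rw [← map_fin_eq_pi hmeas hindep hlaw n, lintegral_map hR hX,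
    ← integral_toReal (f := fun ω => (R (List.ofFn fun i : Fin n => (U i ω, ν i ω)) : ℝ≥0∞))
      (hR.comp hX).aemeasurable (.of_forall fun _ => ENNReal.natCast_lt_top _)]
  simp [Rn_eq_R_ofFn]

theorem stochastic_domination_comparison_general
    (μ μ' : Measure ℕ) [IsProbabilityMeasure μ] [IsProbabilityMeasure μ']
    (hdom : ∀ k : ℕ, 1 ≤ k → μ' (Set.Ici k) ≤ μ (Set.Ici k))
    {Ω : Type} [MeasurableSpace Ω] (P : Measure Ω) [IsProbabilityMeasure P]
    (U : ℕ → Ω → ℝ) (ν ν' : ℕ → Ω → ℕ)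
    (hmeas : ∀ i, Measurable fun ω => (U i ω, ν i ω))
    (hmeas' : ∀ i, Measurable fun ω => (U i ω, ν' i ω))
    (hindep : iIndepFun (fun i ω => (U i ω, ν i ω)) P)
    (hindep' : iIndepFun (fun i ω => (U i ω, ν' i ω)) P)
    (hlaw : ∀ i, P.map (fun ω => (U i ω, ν i ω)) = unif01.prod μ)
    (hlaw' : ∀ i, P.map (fun ω => (U i ω, ν' i ω)) = unif01.prod μ') :
    ∀ n : ℕ, 1 ≤ n →
      ∫ ω, (Rn U ν n ω : ℝ) ∂P ≤ ∫ ω, (Rn U ν' n ω : ℝ) ∂P := by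
  intro n _
  have hR_le (v : Fin n → ℝ × ℕ) : (R (List.ofFn v) : ℝ≥0∞) ≤ n := by
    exact_mod_cast (R_le_length _).trans_eq (List.length_ofFn)
  rw [integral_Rn_eq_lintegral hmeas hindep hlaw, integral_Rn_eq_lintegral hmeas' hindep' hlaw']
  refine ENNReal.toReal_mono (ne_top_of_le_ne_top (ENNReal.natCast_ne_top n)
    ((lintegral_mono hR_le).trans_eq (by simp))) ?_
  exact lintegral_pi_le_of_antitone unif01 hdom
    (Measurable.of_discrete.comp (measurable_R_ofFn n)) (ENNReal.natCast_ne_top n) hR_le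
    fun v w h => by exact_mod_cast R_le_of_moreLives (moreLives_ofFn h)

/-- If `μ` stochastically dominates `μ'` then, with the same i.i.d. uniform labels,
`E[𝐑_μ(n)] ≤ E[𝐑_μ'(n)]` for every `n ≥ 1`. -/
theorem stochastic_domination_comparison
    (μ μ' : Measure ℕ) [IsProbabilityMeasure μ] [IsProbabilityMeasure μ']
    (hμ0 : μ {0} = 0) (hμ'0 : μ' {0} = 0)
    (hdom : ∀ k : ℕ, 1 ≤ k → μ' (Set.Ici k) ≤ μ (Set.Ici k))
    {Ω : Type} [MeasurableSpace Ω] (P : Measure Ω) [IsProbabilityMeasure P]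
    (U : ℕ → Ω → ℝ) (ν ν' : ℕ → Ω → ℕ)
    (hmeas : ∀ i, Measurable fun ω => (U i ω, ν i ω))
    (hmeas' : ∀ i, Measurable fun ω => (U i ω, ν' i ω))
    (hindep : iIndepFun (fun i ω => (U i ω, ν i ω)) P)
    (hindep' : iIndepFun (fun i ω => (U i ω, ν' i ω)) P)
    (hlaw : ∀ i, P.map (fun ω => (U i ω, ν i ω)) = unif01.prod μ)
    (hlaw' : ∀ i, P.map (fun ω => (U i ω, ν' i ω)) = unif01.prod μ') :
    ∀ n : ℕ, 1 ≤ n →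
      ∫ ω, (Rn U ν n ω : ℝ) ∂P ≤ ∫ ω, (Rn U ν' n ω : ℝ) ∂P :=
  stochastic_domination_comparison_general μ μ' hdom P U ν ν' hmeas hmeas' hindep hindep' hlaw hlaw'

end HeapPatience
end

section
/- Let f : [0,1] → [0,+∞] be non-decreasing, a_f := inf{x : f(x) = +∞}, D_f := {(x,t) ∈ (0,a_f)×(0,+∞) : t > f(x)}, F(x,t,ν) := (x, t−f(x), ν), and B_t := [0,1]×[0,t]. Let ξ be a finite subset of D_f × {1,2,…} whose points have pairwise distinct first coordinates and such that both ξ and F(ξ) have pairwise distinct second coordinates. Then for every t ≥ 0: R(ξ ∩ (B_t×ℕ)) ≤ R(F(ξ ∩ (B_t×ℕ))) ≤ R(F(ξ) ∩ (B_t×ℕ)). -/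
open MeasureTheory ProbabilityTheory Filter Topology
open scoped ENNReal NNReal

namespace HeapPatience

/-- Number of heaps produced by the timed marked points of `l`, processed in
increasing order of their time (second) coordinates. -/
noncomputable def Rtimed (l : List (ℝ × ℝ × ℕ)) : ℕ :=
  R ((l.mergeSort fun p q => decide (p.2.1 ≤ q.2.1)).map fun p => (p.1, p.2.2))

/-!
The number of heaps depends on the state of the algorithm only through its profile
`y ↦ (remaining lives carried by labels < y)`, which evolves by an explicit rule. A profile
exceeding another by at most `d` below every label still to come produces at most `d` fewer
heaps. Two consequences drive the proof: exchanging consecutive items so that the larger label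
comes first never decreases the number of heaps (the later item then attaches to the earlier
one), and deleting an item whose label is at least every later label never increases it.

When every point falls by `f(x)` with `f` non-decreasing, two points can only exchange their time
order if the earlier one has the smaller label; so `F(ξ ∩ B_t)` is obtained from `ξ ∩ B_t` by
such exchanges. The points of `F(ξ) ∩ B_t` missing from `F(ξ ∩ B_t)` fell from above `t`, which
forces their labels to exceed those of all later points of `F(ξ ∩ B_t)`; deleting them one by one
gives the second inequality.
-/

noncomputable def livesBelow : List (ℝ × ℕ) → ℝ → ℕ
  | [], _ => 0
  | p :: σ, y => (if p.1 < y then p.2 else 0) + livesBelow σ y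

theorem livesBelow_mono (σ : List (ℝ × ℕ)) : Monotone (livesBelow σ) := by
  intro y z hyz
  induction σ with
  | nil => rfl
  | cons p σ ih =>
    simp only [livesBelow]
    split_ifs with h1 h2
    · omega
    · exact absurd (h1.trans_le hyz) h2
    · omega
    · omega

theorem livesBelow_add_le {σ : List (ℝ × ℕ)} {p : ℝ × ℕ} {x y : ℝ} (hp : p ∈ σ) (hy : y ≤ p.1)
    (hx : p.1 < x) : livesBelow σ y + p.2 ≤ livesBelow σ x := by
  induction σ with
  | nil => simp at hp
  | cons a σ ih =>
    have hmono := livesBelow_mono σ (hy.trans hx.le)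
    simp only [livesBelow]
    rcases List.mem_cons.mp hp with rfl | hp
    · simp only [not_lt.mpr hy, hx, if_true, if_false]; omega
    · have := ih hp
      split_ifs with h1 h2 <;> first | omega | exact absurd (h1.trans_le (hy.trans hx.le)) h2

theorem livesBelow_eq_of_no_alive_between {σ : List (ℝ × ℕ)} {x y : ℝ} (hyx : y ≤ x)
    (h : ∀ p ∈ σ, 0 < p.2 → p.1 < x → p.1 < y) : livesBelow σ x = livesBelow σ y := by
  induction σ with
  | nil => rfl
  | cons a σ ih =>
    simp only [livesBelow, ih fun p hp => h p (List.mem_cons_of_mem _ hp)]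
    have ha := h a List.mem_cons_self
    split_ifs <;> grind

theorem livesBelow_decrementAt {σ : List (ℝ × ℕ)} {x : ℝ} (h : ∃ p ∈ σ, p.1 = x ∧ 0 < p.2)
    (y : ℝ) : livesBelow (decrementAt σ x) y + (if x < y then 1 else 0) = livesBelow σ y := by
  induction σ with
  | nil => simp at h
  | cons a σ ih =>
    rw [decrementAt]
    by_cases ha : a.1 = x ∧ 0 < a.2
    · simp only [ha, and_self, if_true, livesBelow]
      split_ifs <;> omega
    · obtain ⟨p, hp, hpx⟩ := h
      have hpσ : p ∈ σ := by
        rcases List.mem_cons.mp hp with rfl | hp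
        · exact absurd hpx ha
        · exact hp
      simp only [ha, if_false, livesBelow]
      have := ih ⟨p, hpσ, hpx⟩
      omega

theorem livesBelow_eq_zero_of_no_alive {σ : List (ℝ × ℕ)} {x : ℝ}
    (h : ∀ p ∈ σ, 0 < p.2 → ¬ p.1 < x) : livesBelow σ x = 0 := by
  induction σ with
  | nil => rfl
  | cons a σ ih =>
    simp only [livesBelow, ih fun p hp => h p (List.mem_cons_of_mem _ hp)]
    have := h a List.mem_cons_self
    split_ifs <;> grind

/-- The new item `it` removes one life from the alive label just below `it.1` (if any) and brings
`it.2` lives at `it.1`. -/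
noncomputable def stepProfile (c : ℝ → ℕ) (it : ℝ × ℕ) (y : ℝ) : ℕ :=
  if y ≤ it.1 then min (c y) (c it.1 - 1) else c y - min (c it.1) 1 + it.2

noncomputable def heapsFrom : (ℝ → ℕ) → List (ℝ × ℕ) → ℕ
  | _, [] => 0
  | c, it :: l => (if c it.1 = 0 then 1 else 0) + heapsFrom (stepProfile c it) l

theorem livesBelow_root {σ : List (ℝ × ℕ)} {x : ℝ} (v : ℕ)
    (h : ∀ p ∈ σ, 0 < p.2 → ¬ p.1 < x) :
    livesBelow ((x, v) :: σ) = stepProfile (livesBelow σ) (x, v) := by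
  funext y
  have hx := livesBelow_eq_zero_of_no_alive h
  have hy : y ≤ x → livesBelow σ y ≤ livesBelow σ x := fun h => livesBelow_mono σ h
  simp only [livesBelow, stepProfile]
  split_ifs <;> grind

theorem livesBelow_attach {σ : List (ℝ × ℕ)} {q : ℝ × ℕ} {x : ℝ} (v : ℕ) (hqσ : q ∈ σ)
    (hq : 0 < q.2 ∧ q.1 < x) (hmax : ∀ p ∈ σ, 0 < p.2 → p.1 < x → p.1 ≤ q.1) :
    livesBelow ((x, v) :: decrementAt σ q.1) = stepProfile (livesBelow σ) (x, v) := by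
  funext y
  have hdec := livesBelow_decrementAt ⟨q, hqσ, rfl, hq.1⟩ y
  have hqx := livesBelow_add_le hqσ le_rfl hq.2
  simp only [livesBelow, stepProfile]
  rcases le_or_gt y q.1 with hyq | hqy
  · have := livesBelow_add_le hqσ hyq hq.2
    simp only [hyq.trans hq.2.le, not_lt.mpr hyq, not_lt.mpr (hyq.trans hq.2.le), if_true,
      if_false] at hdec ⊢
    omega
  rcases le_or_gt y x with hyx | hxy
  · have := livesBelow_eq_of_no_alive_between hyx fun p hp h1 h2 => (hmax p hp h1 h2).trans_lt hqy
    have := livesBelow_add_le hqσ le_rfl hqy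
    simp only [hqy, hyx, not_lt.mpr hyx, if_true, if_false] at hdec ⊢
    omega
  · have := livesBelow_mono σ hxy.le
    simp only [hqy, hxy, not_le.mpr hxy, if_true, if_false] at hdec ⊢
    omega

theorem livesBelow_step (acc : List (ℝ × ℕ) × ℕ) (it : ℝ × ℕ) :
    livesBelow (step acc it).1 = stepProfile (livesBelow acc.1) it ∧
      (step acc it).2 = acc.2 + if livesBelow acc.1 it.1 = 0 then 1 else 0 := by
  obtain ⟨σ, k⟩ := acc
  obtain ⟨x, v⟩ := it
  rw [step]
  cases hm : (σ.filter fun p => decide (0 < p.2 ∧ p.1 < x)).argmax Prod.fst with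
  | none =>
    have hroot : ∀ p ∈ σ, 0 < p.2 → ¬ p.1 < x := fun p hp h1 h2 => by
      have : p ∈ σ.filter fun p => decide (0 < p.2 ∧ p.1 < x) :=
        List.mem_filter.mpr ⟨hp, by simp [h1, h2]⟩
      rw [List.argmax_eq_none.mp hm] at this
      exact List.not_mem_nil this
    exact ⟨livesBelow_root v hroot, by simp [livesBelow_eq_zero_of_no_alive hroot]⟩
  | some q =>
    obtain ⟨hqσ, hq⟩ := List.mem_filter.mp (List.argmax_mem hm)
    simp only [decide_eq_true_eq] at hq
    have hmax : ∀ p ∈ σ, 0 < p.2 → p.1 < x → p.1 ≤ q.1 := fun p hp h1 h2 =>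
      List.le_of_mem_argmax (List.mem_filter.mpr ⟨hp, by simpa using ⟨h1, h2⟩⟩) hm
    have hqx := livesBelow_add_le hqσ le_rfl hq.2
    exact ⟨livesBelow_attach v hqσ hq hmax, by simp; omega⟩

theorem foldl_step_snd (l σ : List (ℝ × ℕ)) (k : ℕ) :
    (l.foldl step (σ, k)).2 = k + heapsFrom (livesBelow σ) l := by
  induction l generalizing σ k with
  | nil => rfl
  | cons it l ih =>
    obtain ⟨h1, h2⟩ := livesBelow_step (σ, k) it
    dsimp only at h1 h2
    rw [List.foldl_cons, ← Prod.mk.eta (p := step (σ, k) it), ih, h1, h2, heapsFrom]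
    omega

theorem R_eq_heapsFrom (items : List (ℝ × ℕ)) : R items = heapsFrom (fun _ => 0) items := by
  rw [R, run, foldl_step_snd, zero_add]
  rfl

theorem monotone_stepProfile {c : ℝ → ℕ} (hc : Monotone c) (it : ℝ × ℕ) :
    Monotone (stepProfile c it) := by
  intro y z hyz
  have := hc hyz
  simp only [stepProfile]
  split_ifs with hy hz hz
  · omega
  · have := hc (not_le.mp hz).le; omega
  · exact absurd (hyz.trans hz) hy
  · omega

theorem heapsFrom_le_add_of_le {c c' : ℝ → ℕ} (hc : Monotone c) {l : List (ℝ × ℕ)} {d : ℕ}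
    (h : ∀ y, (∃ p ∈ l, y ≤ p.1) → c' y ≤ c y + d) : heapsFrom c l ≤ heapsFrom c' l + d := by
  induction l generalizing c c' d with
  | nil => simp [heapsFrom]
  | cons it l ih =>
    have hx := h it.1 ⟨it, List.mem_cons_self, le_rfl⟩
    have := ih (monotone_stepProfile hc it) (c' := stepProfile c' it)
      (d := d + (if c' it.1 = 0 then 1 else 0) - (if c it.1 = 0 then 1 else 0))
      fun y ⟨p, hp, hyp⟩ => by
        have hy := h y ⟨p, List.mem_cons_of_mem _ hp, hyp⟩
        rcases le_or_gt y it.1 with hyx | hxy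
        · have := hc hyx
          simp only [stepProfile, hyx, if_true]
          split_ifs <;> omega
        · have := hc hxy.le
          simp only [stepProfile, not_le.mpr hxy, if_false]
          split_ifs <;> omega
    simp only [heapsFrom]
    split_ifs at this ⊢ <;> omega

theorem heapsFrom_le_cons {c : ℝ → ℕ} (hc : Monotone c) {l : List (ℝ × ℕ)} {e : ℝ × ℕ}
    (hl : ∀ p ∈ l, p.1 ≤ e.1) : heapsFrom c l ≤ heapsFrom c (e :: l) := by
  rw [heapsFrom, add_comm]
  refine heapsFrom_le_add_of_le hc fun y ⟨p, hp, hyp⟩ => ?_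
  simp only [stepProfile, hyp.trans (hl p hp), if_true]
  omega

theorem heapsFrom_swap {c : ℝ → ℕ} (hc : Monotone c) {a b : ℝ × ℕ} (hab : a.1 < b.1)
    (ha : 1 ≤ a.2) (l : List (ℝ × ℕ)) :
    heapsFrom c (a :: b :: l) ≤ heapsFrom c (b :: a :: l) := by
  simp only [heapsFrom]
  have hcab := hc hab.le
  have hdom := heapsFrom_le_add_of_le (monotone_stepProfile (monotone_stepProfile hc a) b) (l := l)
    (c' := stepProfile (stepProfile c b) a)
    (d := (if c b.1 = 0 then 1 else 0) + (if stepProfile c b a.1 = 0 then 1 else 0)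
      - (if c a.1 = 0 then 1 else 0)) fun y _ => by
    simp only [stepProfile, not_le.mpr hab, hab.le, if_true, if_false]
    rcases le_or_gt y a.1 with h1 | h1
    · have := hc h1
      simp only [h1, h1.trans hab.le, if_true]
      split_ifs <;> omega
    rcases le_or_gt y b.1 with h2 | h2
    · have := hc h1.le
      have := hc h2
      simp only [not_le.mpr h1, h2, if_true, if_false]
      split_ifs <;> omega
    · have := hc h1.le
      have := hc h2.le
      simp only [not_le.mpr h1, not_le.mpr h2, if_false]
      split_ifs <;> omega
  simp only [stepProfile, not_le.mpr hab, hab.le, if_true, if_false] at hdom ⊢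
  split_ifs at hdom ⊢ <;> omega

theorem heapsFrom_bubble {c : ℝ → ℕ} (hc : Monotone c) {w : List (ℝ × ℕ)} {e : ℝ × ℕ}
    (hw : ∀ a ∈ w, a.1 < e.1 ∧ 1 ≤ a.2) (u : List (ℝ × ℕ)) :
    heapsFrom c (w ++ e :: u) ≤ heapsFrom c (e :: (w ++ u)) := by
  induction w generalizing c with
  | nil => exact le_rfl
  | cons a w ih =>
    have ha := hw a List.mem_cons_self
    have := ih (monotone_stepProfile hc a) fun b hb => hw b (List.mem_cons_of_mem _ hb)
    exact (Nat.add_le_add_left this _).trans (heapsFrom_swap hc ha.1 ha.2 _)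

theorem heapsFrom_map_le_of_perm {α : Type*} (π : α → ℝ × ℕ) {r r' : α → α → Prop}
    {l l' : List α} (hperm : l.Perm l') (hl : l.Pairwise r) (hl' : l'.Pairwise r')
    (hinv : ∀ p ∈ l, ∀ q ∈ l, r p q → r' q p → (π p).1 < (π q).1 ∧ 1 ≤ (π p).2)
    {c : ℝ → ℕ} (hc : Monotone c) : heapsFrom c (l.map π) ≤ heapsFrom c (l'.map π) := by
  induction l' generalizing l c with
  | nil => rw [hperm.eq_nil]
  | cons h t ih =>
    obtain ⟨w, u, rfl⟩ := List.append_of_mem (hperm.mem_iff.mpr List.mem_cons_self)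
    have hwu : (w ++ u).Perm t := (List.perm_middle.symm.trans hperm).cons_inv
    have hsub : (w ++ u).Sublist (w ++ h :: u) := (List.sublist_cons_self h u).append_left w
    obtain ⟨hht, ht⟩ := List.pairwise_cons.mp hl'
    have hbubble : ∀ b ∈ w.map π, b.1 < (π h).1 ∧ 1 ≤ b.2 := by
      intro b hb
      obtain ⟨x, hx, rfl⟩ := List.mem_map.mp hb
      exact hinv x (by simp [hx]) h (by simp)
        ((List.pairwise_append.mp hl).2.2 x hx h List.mem_cons_self)
        (hht x (hwu.subset (by simp [hx])))
    have hrec := ih hwu (hl.sublist hsub) ht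
      (fun p hp q hq => hinv p (hsub.subset hp) q (hsub.subset hq)) (monotone_stepProfile hc (π h))
    calc heapsFrom c ((w ++ h :: u).map π) = heapsFrom c (w.map π ++ π h :: u.map π) := by simp
      _ ≤ heapsFrom c (π h :: (w.map π ++ u.map π)) := heapsFrom_bubble hc hbubble _
      _ ≤ heapsFrom c ((h :: t).map π) := by
        rw [← List.map_append]
        exact Nat.add_le_add_left hrec _

theorem heapsFrom_map_filter_le {α : Type*} (π : α → ℝ × ℕ) (keep : α → Bool) {l : List α}
    (hl : l.Pairwise fun e r => keep e = false → keep r = true → (π r).1 ≤ (π e).1)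
    {c : ℝ → ℕ} (hc : Monotone c) :
    heapsFrom c ((l.filter keep).map π) ≤ heapsFrom c (l.map π) := by
  induction l generalizing c with
  | nil => exact le_rfl
  | cons a t ih =>
    obtain ⟨ha, ht⟩ := List.pairwise_cons.mp hl
    have hrec := ih ht (monotone_stepProfile hc (π a))
    cases hka : keep a
    · rw [List.filter_cons_of_neg (by simp [hka])]
      refine (heapsFrom_le_cons hc (e := π a) fun p hp => ?_).trans (Nat.add_le_add_left hrec _)
      obtain ⟨x, hx, rfl⟩ := List.mem_map.mp hp
      obtain ⟨hxt, hkx⟩ := List.mem_filter.mp hx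
      exact ha x hxt hka hkx
    · rw [List.filter_cons_of_pos hka]
      exact Nat.add_le_add_left hrec _

theorem pairwise_le_mergeSort {α : Type*} (κ : α → ℝ) (l : List α) :
    (l.mergeSort fun a b => decide (κ a ≤ κ b)).Pairwise fun a b => κ a ≤ κ b := by
  refine (List.pairwise_mergeSort (fun a b c hab hbc => ?_) (fun a b => ?_) l).imp of_decide_eq_true
  · simp only [decide_eq_true_eq] at hab hbc ⊢
    exact hab.trans hbc
  · simpa using le_total (κ a) (κ b)

theorem pairwise_lt_mergeSort {α : Type*} (κ : α → ℝ) {l : List α} (hl : l.Nodup)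
    (hκ : Set.InjOn κ {a | a ∈ l}) :
    (l.mergeSort fun a b => decide (κ a ≤ κ b)).Pairwise fun a b => κ a < κ b := by
  have hperm := List.mergeSort_perm l fun a b => decide (κ a ≤ κ b)
  refine ((pairwise_le_mergeSort κ l).and (hperm.nodup_iff.mpr hl)).imp_of_mem
    fun ha hb ⟨hle, hne⟩ => hle.lt_of_ne fun he => hne ?_
  exact hκ (hperm.subset ha) (hperm.subset hb) he

theorem Rtimed_le_Rtimed_of_subset {l m : List (ℝ × ℝ × ℕ)} (hl : l.Nodup) (hm : m.Nodup)
    (htime : Set.InjOn (fun p => p.2.1) {p | p ∈ m}) (hlm : l ⊆ m)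
    (hextra : ∀ e ∈ m, e ∉ l → ∀ r ∈ l, e.2.1 < r.2.1 → r.1 ≤ e.1) :
    Rtimed l ≤ Rtimed m := by
  classical
  rw [Rtimed, Rtimed, R_eq_heapsFrom, R_eq_heapsFrom]
  set s := m.mergeSort fun p q => decide (p.2.1 ≤ q.2.1)
  have hs : s.Perm m := List.mergeSort_perm _ _
  have hsorted := pairwise_lt_mergeSort _ hm htime
  have hsl : l.mergeSort (fun p q => decide (p.2.1 ≤ q.2.1)) = s.filter (· ∈ l) := by
    have hl' := List.mergeSort_perm l fun p q => decide (p.2.1 ≤ q.2.1)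
    refine List.Perm.eq_of_pairwise (fun _ _ _ _ h h' => (lt_asymm h h').elim)
      (pairwise_lt_mergeSort _ hl (htime.mono fun p hp => hlm hp)) (hsorted.filter _) ?_
    refine (List.perm_ext_iff_of_nodup (hl'.nodup_iff.mpr hl)
      ((hs.nodup_iff.mpr hm).filter _)).mpr fun p => ?_
    simp only [hl'.mem_iff, List.mem_filter, hs.mem_iff, decide_eq_true_eq]
    exact ⟨fun h => ⟨hlm h, h⟩, And.right⟩
  rw [hsl]
  refine heapsFrom_map_filter_le _ _ (hsorted.imp_of_mem fun he hr hlt hke hkr => ?_)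
    monotone_const
  simp only [decide_eq_true_eq, decide_eq_false_iff_not] at hke hkr
  exact hextra _ (hs.subset he) hke _ hkr hlt

def fall (g : ℝ × ℝ × ℕ → ℝ) (p : ℝ × ℝ × ℕ) : ℝ × ℝ × ℕ := (p.1, p.2.1 - g p, p.2.2)

theorem lt_of_fall_crossing {g : ℝ × ℝ × ℕ → ℝ} {p q : ℝ × ℝ × ℕ} (hg : q.1 ≤ p.1 → g q ≤ g p)
    (hpq : p.2.1 < q.2.1) (hfall : (fall g q).2.1 ≤ (fall g p).2.1) : p.1 < q.1 := by
  by_contra h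
  have := hg (not_lt.mp h)
  simp only [fall] at hfall
  linarith

theorem injOn_fall {g : ℝ × ℝ × ℕ → ℝ} {s : Set (ℝ × ℝ × ℕ)}
    (hg : ∀ p ∈ s, ∀ q ∈ s, p.1 ≤ q.1 → g p ≤ g q) (htime : Set.InjOn (fun p => p.2.1) s) :
    Set.InjOn (fall g) s := by
  intro p hp q hq h
  simp only [fall, Prod.mk.injEq] at h
  obtain ⟨h1, h2, -⟩ := h
  have := hg p hp q hq h1.le
  have := hg q hq p hp h1.ge
  exact htime hp hq (by linarith)

theorem Rtimed_le_Rtimed_map_fall (g : ℝ × ℝ × ℕ → ℝ) {l : List (ℝ × ℝ × ℕ)} (hl : l.Nodup)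
    (htime : Set.InjOn (fun p => p.2.1) {p | p ∈ l})
    (hg : ∀ p ∈ l, ∀ q ∈ l, p.1 ≤ q.1 → g p ≤ g q) (hlives : ∀ p ∈ l, 1 ≤ p.2.2) :
    Rtimed l ≤ Rtimed (l.map (fall g)) := by
  rw [Rtimed, Rtimed, R_eq_heapsFrom, R_eq_heapsFrom]
  set s := l.mergeSort fun p q => decide (p.2.1 ≤ q.2.1)
  have hs : s.Perm l := List.mergeSort_perm _ _
  have hproj : (s.map (fall g)).map (fun p => (p.1, p.2.2)) = s.map fun p => (p.1, p.2.2) := by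
    simp [fall]
  rw [← hproj]
  refine heapsFrom_map_le_of_perm _
    (r := fun x y => ∃ p ∈ l, ∃ q ∈ l, x = fall g p ∧ y = fall g q ∧ p.2.1 < q.2.1)
    ((hs.map _).trans (List.mergeSort_perm _ _).symm) ?_ (pairwise_le_mergeSort _ _) ?_
    monotone_const
  · exact List.pairwise_map.mpr ((pairwise_lt_mergeSort _ hl htime).imp_of_mem
      fun ha hb h => ⟨_, hs.subset ha, _, hs.subset hb, rfl, rfl, h⟩)
  · rintro _ - _ - ⟨p, hp, q, hq, rfl, rfl, hpq⟩ hqp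
    exact ⟨lt_of_fall_crossing (p := p) (q := q) (hg q hq p hp) hpq hqp, hlives p hp⟩

theorem Rtimed_map_fall_le (g : ℝ × ℝ × ℕ → ℝ) (ξ : Finset (ℝ × ℝ × ℕ)) (t : ℝ)
    (hg : ∀ p ∈ ξ, ∀ q ∈ ξ, p.1 ≤ q.1 → g p ≤ g q) (hg0 : ∀ p ∈ ξ, 0 ≤ g p ∧ g p ≤ p.2.1)
    (htime : Set.InjOn (fun p : ℝ × ℝ × ℕ => p.2.1) ξ)
    (htime' : Set.InjOn (fun p => p.2.1) (fall g '' ξ)) :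
    Rtimed (((ξ.filter fun p => 0 ≤ p.2.1 ∧ p.2.1 ≤ t).toList).map (fall g))
      ≤ Rtimed ((ξ.toList.map (fall g)).filter fun p => decide (0 ≤ p.2.1 ∧ p.2.1 ≤ t)) := by
  have hinj := injOn_fall hg htime
  refine Rtimed_le_Rtimed_of_subset
    ((Finset.nodup_toList _).map_on fun p hp q hq => hinj (by simp_all) (by simp_all))
    (((Finset.nodup_toList _).map_on fun p hp q hq => hinj (by simp_all) (by simp_all)).filter _)
    (htime'.mono ?_) ?_ ?_
  · intro x hx
    simp only [List.mem_filter, List.mem_map, Finset.mem_toList] at hx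
    obtain ⟨⟨p, hp, rfl⟩, -⟩ := hx
    exact Set.mem_image_of_mem _ hp
  · intro x hx
    simp only [List.mem_map, Finset.mem_toList, Finset.mem_filter] at hx
    obtain ⟨p, ⟨hp, ht0, hpt⟩, rfl⟩ := hx
    have := hg0 p hp
    simp only [List.mem_filter, List.mem_map, Finset.mem_toList, decide_eq_true_eq, fall]
    exact ⟨⟨p, hp, rfl⟩, by linarith, by linarith⟩
  · intro e he hel r hr hlt
    simp only [List.mem_filter, List.mem_map, Finset.mem_toList, decide_eq_true_eq] at he
    simp only [List.mem_map, Finset.mem_toList, Finset.mem_filter] at hr hel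
    obtain ⟨⟨q, hq, rfl⟩, -⟩ := he
    obtain ⟨p, ⟨hp, -, hpt⟩, rfl⟩ := hr
    have hqt : t < q.2.1 := by
      by_contra h
      have := hg0 q hq
      exact hel ⟨q, ⟨hq, by linarith, not_lt.mp h⟩, rfl⟩
    exact (lt_of_fall_crossing (p := p) (q := q) (hg q hq p hp) (by linarith) hlt.le).le

theorem falling_domain_comparison_general
    (f : ℝ → ℝ≥0∞) (hf : MonotoneOn f (Set.Icc (0 : ℝ) 1))
    (af : ℝ) (haf : af = sInf ({x ∈ Set.Icc (0 : ℝ) 1 | f x = ⊤} ∪ {1}))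
    (F : ℝ × ℝ × ℕ → ℝ × ℝ × ℕ)
    (hF : ∀ p, F p = (p.1, p.2.1 - (f p.1).toReal, p.2.2))
    (ξ : Finset (ℝ × ℝ × ℕ))
    (hmem : ∀ p ∈ ξ, p.1 ∈ Set.Ioo (0 : ℝ) af ∧ f p.1 < ENNReal.ofReal p.2.1 ∧ 1 ≤ p.2.2)
    (hinj2 : Set.InjOn (fun p : ℝ × ℝ × ℕ => p.2.1) ξ)
    (hinj2' : Set.InjOn (fun p : ℝ × ℝ × ℕ => p.2.1) (F '' ξ)) :
    ∀ t : ℝ, 0 ≤ t →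
      Rtimed ((ξ.filter fun p => 0 ≤ p.2.1 ∧ p.2.1 ≤ t).toList)
          ≤ Rtimed (((ξ.filter fun p => 0 ≤ p.2.1 ∧ p.2.1 ≤ t).toList).map F) ∧
        Rtimed (((ξ.filter fun p => 0 ≤ p.2.1 ∧ p.2.1 ≤ t).toList).map F)
          ≤ Rtimed ((ξ.toList.map F).filter fun p => decide (0 ≤ p.2.1 ∧ p.2.1 ≤ t)) := by
  intro t _
  obtain rfl : F = fall fun p => (f p.1).toReal := funext hF
  have haf1 : af ≤ 1 := haf ▸ csInf_le
    ⟨0, by rintro y (⟨⟨h0, -⟩, -⟩ | rfl); exacts [h0, zero_le_one]⟩ (Set.mem_union_right _ rfl)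
  have hlabel : ∀ p ∈ ξ, p.1 ∈ Set.Icc (0 : ℝ) 1 := fun p hp =>
    ⟨(hmem p hp).1.1.le, (hmem p hp).1.2.le.trans haf1⟩
  have hg : ∀ p ∈ ξ, ∀ q ∈ ξ, p.1 ≤ q.1 → (f p.1).toReal ≤ (f q.1).toReal :=
    fun p hp q hq hpq => ENNReal.toReal_mono ((hmem q hq).2.1.trans ENNReal.ofReal_lt_top).ne
      (hf (hlabel p hp) (hlabel q hq) hpq)
  have hg0 : ∀ p ∈ ξ, 0 ≤ (f p.1).toReal ∧ (f p.1).toReal ≤ p.2.1 := fun p hp =>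
    ⟨ENNReal.toReal_nonneg, (ENNReal.toReal_lt_of_lt_ofReal (hmem p hp).2.1).le⟩
  refine ⟨Rtimed_le_Rtimed_map_fall _ (Finset.nodup_toList _) ?_ ?_ ?_,
    Rtimed_map_fall_le _ ξ t hg hg0 hinj2 hinj2'⟩
  · exact hinj2.mono fun p hp => (Finset.mem_filter.mp (Finset.mem_toList.mp hp)).1
  · simp only [Finset.mem_toList, Finset.mem_filter]
    exact fun p hp q hq => hg p hp.1 q hq.1
  · simp only [Finset.mem_toList, Finset.mem_filter]
    exact fun p hp => (hmem p hp.1).2.2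

/-- Comparison of the number of heaps when the hypograph of a non-decreasing function `f`
is removed and the points above it fall down to the ground:
`R(ξ ∩ B_t) ≤ R(F(ξ ∩ B_t)) ≤ R(F(ξ) ∩ B_t)` for every `t ≥ 0`. -/
theorem falling_domain_comparison
    (f : ℝ → ℝ≥0∞) (hf : MonotoneOn f (Set.Icc (0 : ℝ) 1))
    (af : ℝ) (haf : af = sInf ({x ∈ Set.Icc (0 : ℝ) 1 | f x = ⊤} ∪ {1}))
    (F : ℝ × ℝ × ℕ → ℝ × ℝ × ℕ)
    (hF : ∀ p, F p = (p.1, p.2.1 - (f p.1).toReal, p.2.2))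
    (ξ : Finset (ℝ × ℝ × ℕ))
    (hmem : ∀ p ∈ ξ, p.1 ∈ Set.Ioo (0 : ℝ) af ∧ f p.1 < ENNReal.ofReal p.2.1 ∧ 1 ≤ p.2.2)
    (hinj1 : Set.InjOn (fun p : ℝ × ℝ × ℕ => p.1) ξ)
    (hinj2 : Set.InjOn (fun p : ℝ × ℝ × ℕ => p.2.1) ξ)
    (hinj2' : Set.InjOn (fun p : ℝ × ℝ × ℕ => p.2.1) (F '' ξ)) :
    ∀ t : ℝ, 0 ≤ t →
      Rtimed ((ξ.filter fun p => 0 ≤ p.2.1 ∧ p.2.1 ≤ t).toList)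
          ≤ Rtimed (((ξ.filter fun p => 0 ≤ p.2.1 ∧ p.2.1 ≤ t).toList).map F) ∧
        Rtimed (((ξ.filter fun p => 0 ≤ p.2.1 ∧ p.2.1 ≤ t).toList).map F)
          ≤ Rtimed ((ξ.toList.map F).filter fun p => decide (0 ≤ p.2.1 ∧ p.2.1 ≤ t)) :=
  falling_domain_comparison_general f hf af haf F hF ξ hmem hinj2 hinj2'

end HeapPatience
end
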